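/- (Number of configurations of type A) For every n ≥ 1, the set of configurations of ℤA_{n+1} is finite and its cardinality equals M(n), the n-th Motzkin number. -/
import Mathlib


/-- The Motzkin numbers: `M 0 = 1`, `M 1 = 1` and, for `n ≥ 2`,
`M n = M (n-1) + ∑_{i=0}^{n-2} M i * M (n-2-i)`. -/
def motzkin : ℕ → ℕ
  | 0 => 1
  | 1 => 1
  | n + 2 =>
      motzkin (n + 1) +
        ∑ i ∈ (Finset.range (n + 1)).attach, motzkin i.1 * motzkin (n - i.1)
decreasing_by
  all_goals
    first
      | omega
      | (have h := Finset.mem_range.mp i.2; omega)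

/-- Sum over the arrows `y → v` of `ℤA_{n+1}` of the value `f v`. The vertex set of
`ℤA_{n+1}` is `ℤ × {0,…,n}`, with arrows `(q,s) → (q,s+1)` for `s < n` and
`(q,s) → (q+1,s-1)` for `0 < s`. -/
def stepA (n : ℕ) (f : ℤ × ℕ → ℕ) (y : ℤ × ℕ) : ℤ :=
  (if y.2 < n then (f (y.1, y.2 + 1) : ℤ) else 0) +
    (if 0 < y.2 then (f (y.1 + 1, y.2 - 1) : ℤ) else 0)

/-- `hA n x k y` is `h_k(y,x)` for `ℤA_{n+1}`: `h_0(y,x) = δ(y,x)` and, for `k > 0`,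
`h_k(y,x) = max(h'_k(y,x), 0)` where
`h'_k(y,x) = ∑_{y → v} h_{k-1}(v,x) - h_{k-2}(τ⁻¹ y, x)` and `τ⁻¹(q,s) = (q+1,s)`. -/
def hA (n : ℕ) (x : ℤ × ℕ) : ℕ → ℤ × ℕ → ℕ
  | 0 => fun y => if y = x then 1 else 0
  | 1 => fun y => (stepA n (hA n x 0) y).toNat
  | k + 2 => fun y =>
      (stepA n (hA n x (k + 1)) y - (hA n x k (y.1 + 1, y.2) : ℤ)).toNat

/-- `h'A n x k y` is `h'_k(y,x)` (meaningful for `k ≥ 1`):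
`h'_k(y,x) = ∑_{y → v} h_{k-1}(v,x) - h_{k-2}(τ⁻¹ y, x) ∈ ℤ`. -/
def h'A (n : ℕ) (x : ℤ × ℕ) (k : ℕ) (y : ℤ × ℕ) : ℤ :=
  stepA n (hA n x (k - 1)) y -
    (if 2 ≤ k then (hA n x (k - 2) (y.1 + 1, y.2) : ℤ) else 0)

/-- `hTotA n y x = h(y,x) = ∑_{k ≥ 0} h_k(y,x)` (a finite sum, via `finsum`). -/
noncomputable def hTotA (n : ℕ) (y x : ℤ × ℕ) : ℕ := ∑ᶠ k : ℕ, hA n x k y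

/-- `ω` for `ℤA_{n+1}`: `ω(p,r) = (p+r-n, n-r)`. -/
def ωA (n : ℕ) (v : ℤ × ℕ) : ℤ × ℕ := (v.1 + v.2 - n, n - v.2)

/-- A configuration of `ℤA_{n+1}`: a set `C` of vertices of `ℤA_{n+1}` such that
(C1) every vertex `y` satisfies `h(y,c) > 0` for some `c ∈ C`, and
(C2) `ω C = C` and for `c, d ∈ C`, `h(d,c)` is `2` if `d = c = ω c`, `1` if
`d = c ≠ ω c` or `d = ω c ≠ c`, and `0` otherwise. -/
def IsConfigA (n : ℕ) (C : Set (ℤ × ℕ)) : Prop :=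
  (∀ v ∈ C, v.2 ≤ n) ∧
    (∀ y : ℤ × ℕ, y.2 ≤ n → ∃ c ∈ C, 0 < hTotA n y c) ∧
    ωA n '' C = C ∧
    ∀ c ∈ C, ∀ d ∈ C,
      hTotA n d c =
        if d = c ∧ c = ωA n c then 2
        else if d = c ∨ d = ωA n c then 1
        else 0

-- Part 1: closed form for hA and hTotA
section Part1

lemma hA_zero (n : ℕ) (x y : ℤ × ℕ) : hA n x 0 y = if y = x then 1 else 0 := rfl

lemma hA_one (n : ℕ) (x y : ℤ × ℕ) : hA n x 1 y = (stepA n (hA n x 0) y).toNat := rfl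

lemma hA_two (n : ℕ) (x y : ℤ × ℕ) (k : ℕ) :
    hA n x (k + 2) y =
      (stepA n (hA n x (k + 1)) y - (hA n x k (y.1 + 1, y.2) : ℤ)).toNat := rfl

lemma hA_closed (n : ℕ) (q : ℤ) (s : ℕ) (hs : s ≤ n) :
    ∀ k : ℕ, ∀ p : ℤ, ∀ r : ℕ, r ≤ n →
      hA n (q, s) k (p, r) =
        if p ≤ q ∧ (q : ℤ) ≤ p + r ∧ (p : ℤ) + r ≤ q + s ∧ (q : ℤ) + s ≤ p + n ∧
            (k : ℤ) = 2 * (q - p) + s - r then 1 else 0 := by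
  intro k
  induction k using Nat.strong_induction_on with
  | _ k IH =>
    match k with
    | 0 =>
      intro p r hr
      rw [hA_zero]
      simp only [Prod.mk.injEq]
      split_ifs <;> omega
    | 1 =>
      intro p r hr
      rw [hA_one]
      simp only [stepA, hA_zero, Prod.mk.injEq]
      rcases r with _ | r
      · split_ifs <;> omega
      · simp only [Nat.add_sub_cancel]
        split_ifs <;> omega
    | (k + 2) =>
      intro p r hr
      rw [hA_two]
      simp only [stepA]
      rcases r with _ | r
      · -- r = 0
        simp only [show ¬ (0:ℕ) < 0 from by omega, if_false]
        rw [IH k (by omega) (p+1) 0 (by omega)]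
        by_cases h0n : 0 < n
        · rw [if_pos h0n, IH (k+1) (by omega) p 1 (by omega)]
          split_ifs <;> push_cast <;> omega
        · rw [if_neg h0n]
          split_ifs <;> push_cast <;> omega
      · -- r = r + 1
        simp only [Nat.add_sub_cancel, Nat.succ_sub_one]
        rw [IH (k+1) (by omega) (p+1) r (by omega)]
        rw [IH k (by omega) (p+1) (r+1) hr]
        by_cases hrn : r + 1 < n
        · rw [if_pos hrn, IH (k+1) (by omega) p (r+2) (by omega)]
          rw [if_pos (by omega : 0 < r + 1)]
          split_ifs <;> push_cast <;> omega
        · rw [if_neg hrn, if_pos (by omega : 0 < r + 1)]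
          split_ifs <;> push_cast <;> omega

end Part1
lemma hTotA_closed (n : ℕ) (p q : ℤ) (r s : ℕ) (hr : r ≤ n) (hs : s ≤ n) :
    hTotA n (p, r) (q, s) =
      if p ≤ q ∧ (q : ℤ) ≤ p + r ∧ (p : ℤ) + r ≤ q + s ∧ (q : ℤ) + s ≤ p + n then 1
      else 0 := by
  unfold hTotA
  by_cases H : p ≤ q ∧ (q : ℤ) ≤ p + r ∧ (p : ℤ) + r ≤ q + s ∧ (q : ℤ) + s ≤ p + n
  · rw [if_pos H]
    have hk0 : (0 : ℤ) ≤ 2 * (q - p) + s - r := by omega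
    rw [finsum_eq_single _ ((2 * (q - p) + s - r).toNat)]
    · rw [hA_closed n q s hs _ p r hr, if_pos]
      refine ⟨H.1, H.2.1, H.2.2.1, H.2.2.2, ?_⟩
      omega
    · intro k hk
      rw [hA_closed n q s hs _ p r hr, if_neg]
      intro hcon
      exact hk (by omega)
  · rw [if_neg H]
    apply finsum_eq_zero_of_forall_eq_zero
    intro k
    rw [hA_closed n q s hs _ p r hr, if_neg]
    intro hcon
    exact H ⟨hcon.1, hcon.2.1, hcon.2.2.1, hcon.2.2.2.1⟩
section Part2

/-- Noncrossing partial matchings of `{0,…,n-1}`, encoded as involutions. -/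
def NCInv (n : ℕ) (f : ℕ → ℕ) : Prop :=
  (∀ i, i < n → f i < n) ∧ (∀ i, n ≤ i → f i = i) ∧ (∀ i, f (f i) = i) ∧
    (∀ i j, i < j → j < f i → i < f j ∧ f j < f i)

/-- Residue of an integer mod `n`, as a natural number. -/
def resZ (n : ℕ) (q : ℤ) : ℕ := (q % (n : ℤ)).toNat

/-- The configuration associated with a matching. -/
def confOf (n : ℕ) (f : ℕ → ℕ) : Set (ℤ × ℕ) :=
  {v | v.2 ≤ n ∧ (n : ℤ) ∣ (v.1 + v.2 - f (resZ n v.1))}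

lemma resZ_lt {n : ℕ} (hn : 1 ≤ n) (q : ℤ) : resZ n q < n := by
  have h1 : q % (n : ℤ) < n := Int.emod_lt_of_pos _ (by exact_mod_cast hn)
  have h0 : 0 ≤ q % (n : ℤ) := Int.emod_nonneg _ (by positivity)
  unfold resZ; omega

lemma resZ_dvd {n : ℕ} (hn : 1 ≤ n) (q : ℤ) : (n : ℤ) ∣ (q - resZ n q) := by
  have h0 : 0 ≤ q % (n : ℤ) := Int.emod_nonneg _ (by positivity)
  have : (resZ n q : ℤ) = q % (n : ℤ) := by unfold resZ; omega
  rw [this]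
  exact ⟨q / n, by rw [Int.emod_def]; ring⟩

lemma dvd_small2 {n z : ℤ} (h1 : 1 ≤ n) (hd : n ∣ z) (hlo : -n < z) (hhi : z < 2 * n) :
    z = 0 ∨ z = n := by
  rcases hd with ⟨m, rfl⟩
  have h0 : 0 ≤ m := by by_contra h; push_neg at h; nlinarith
  have h2 : m ≤ 1 := by by_contra h; push_neg at h; nlinarith
  have : m = 0 ∨ m = 1 := by omega
  rcases this with rfl | rfl
  · left; ring
  · right; ring

/-- The key lemma: in the configuration attached to a noncrossing matching, the
"hom pattern" between two members forces them to be equal or `ω`-related. -/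
lemma key_lemma {n : ℕ} (hn : 1 ≤ n) {f : ℕ → ℕ} (hf : NCInv n f)
    {p q : ℤ} {r s : ℕ} (hrn : r ≤ n) (hsn : s ≤ n)
    (hpc : (n : ℤ) ∣ (p + r - f (resZ n p))) (hqc : (n : ℤ) ∣ (q + s - f (resZ n q)))
    (h1 : p ≤ q) (h2 : (q : ℤ) ≤ p + r) (h3 : (p : ℤ) + r ≤ q + s)
    (h4 : (q : ℤ) + s ≤ p + n) :
    (p = q ∧ r = s) ∨ ((p : ℤ) = q + s - n ∧ (r : ℤ) = n - s) := by
  obtain ⟨hlt, hid, hinv, hnc⟩ := hf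
  have hbn : resZ n p < n := resZ_lt hn p
  have hpb : (n : ℤ) ∣ (p - resZ n p) := resZ_dvd hn p
  have han : resZ n q < n := resZ_lt hn q
  have hqa : (n : ℤ) ∣ (q - resZ n q) := resZ_dvd hn q
  generalize hB : resZ n p = b at hpc hbn hpb
  generalize hA : resZ n q = a at hqc han hqa
  have hFFB := hinv b
  have hFFA := hinv a
  have hfbn : f b < n := hlt b hbn
  have hfan : f a < n := hlt a han
  have nc1 := hnc a b
  have nc2 := hnc b a
  have nc3 := hnc a (f b)
  have nc4 := hnc (f b) a
  have nc5 := hnc b (f a)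
  have nc6 := hnc (f a) b
  have nc7 := hnc (f a) (f b)
  have nc8 := hnc (f b) (f a)
  generalize hFB : f b = fb at hpc hfbn hFFB nc1 nc2 nc3 nc4 nc5 nc6 nc7 nc8
  generalize hFA : f a = fa at hqc hfan hFFA nc1 nc2 nc3 nc4 nc5 nc6 nc7 nc8
  rw [hFFB] at nc3 nc4 nc7 nc8
  rw [hFFA] at nc5 nc6 nc7 nc8
  have hinj1 : fa = fb → a = b := fun h => by rw [← hFFA, ← hFFB, h]
  have hinj2 : a = b → fa = fb := fun h => by rw [← hFA, ← hFB, h]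
  have hinj3 : fa = b → a = fb := fun h => by rw [← hFFA, h, hFB]
  have hinj4 : a = fb → fa = b := fun h => by rw [← hFA, h]; exact hFFB
  have hnZ : (1 : ℤ) ≤ n := by exact_mod_cast hn
  have hr2 : (r : ℤ) + b - fb = 0 ∨ (r : ℤ) + b - fb = n := by
    apply dvd_small2 hnZ ?_ (by omega) (by omega)
    have hd := dvd_sub hpc hpb
    have he : (p + r - fb) - (p - b) = (r : ℤ) + b - fb := by ring
    rwa [he] at hd
  have hs2 : (s : ℤ) + a - fa = 0 ∨ (s : ℤ) + a - fa = n := by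
    apply dvd_small2 hnZ ?_ (by omega) (by omega)
    have hd := dvd_sub hqc hqa
    have he : (q + s - fa) - (q - a) = (s : ℤ) + a - fa := by ring
    rwa [he] at hd
  have hab : (a : ℤ) - b - (q - p) = 0 ∨ (a : ℤ) - b - (q - p) = -n := by
    have hd : (n : ℤ) ∣ ((q - p) - ((a : ℤ) - b)) := by
      have hd2 := dvd_sub hqa hpb
      have he : (q - a) - (p - b) = (q - p) - ((a : ℤ) - b) := by ring
      rwa [he] at hd2
    rcases dvd_small2 hnZ hd (by omega) (by omega) with h | h
    · left; omega
    · right; omega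
  omega

end Part2
section Part3

lemma resZ_congr {n : ℕ} (hn : 1 ≤ n) {x y : ℤ} (h : (n : ℤ) ∣ (x - y)) :
    resZ n x = resZ n y := by
  unfold resZ
  have : x % (n : ℤ) = y % (n : ℤ) := Int.ModEq.symm (Int.modEq_iff_dvd.mpr h)
  rw [this]

lemma resZ_coe {n : ℕ} (hn : 1 ≤ n) {a : ℕ} (ha : a < n) : resZ n (a : ℤ) = a := by
  unfold resZ
  rw [Int.emod_eq_of_lt (by positivity) (by exact_mod_cast ha)]
  simp

lemma omega_ne {n : ℕ} (hn : 1 ≤ n) (c : ℤ × ℕ) (hc : c.2 ≤ n) : ωA n c ≠ c := by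
  obtain ⟨q, s⟩ := c
  unfold ωA
  intro h
  rw [Prod.mk.injEq] at h
  obtain ⟨h1, h2⟩ := h
  simp only at h1 h2 hc
  omega

lemma confOf_isConfig {n : ℕ} (hn : 1 ≤ n) {f : ℕ → ℕ} (hf : NCInv n f) :
    IsConfigA n (confOf n f) := by
  obtain ⟨hlt, hid, hinv, hnc⟩ := hf
  have hnZ : (1 : ℤ) ≤ n := by exact_mod_cast hn
  refine ⟨fun v hv => hv.1, ?_, ?_, ?_⟩
  · -- C1
    rintro ⟨p, r⟩ hr
    simp only at hr
    set t : ℤ := p + r with ht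
    set a : ℕ := resZ n t with ha
    have han : a < n := resZ_lt hn t
    have hta : (n : ℤ) ∣ (t - a) := resZ_dvd hn t
    have hfan : f a < n := hlt a han
    set st : ℕ := resZ n ((f a : ℤ) - t) with hst
    have hstn : st < n := resZ_lt hn _
    have hstd : (n : ℤ) ∣ ((f a : ℤ) - t - st) := resZ_dvd hn _
    have hmem : (t, st) ∈ confOf n f := by
      refine ⟨by simpa using hstn.le, ?_⟩
      simp only [← ha]
      have : t + st - f a = -(((f a : ℤ) - t) - st) := by ring
      rw [this]
      exact dvd_neg.mpr hstd
    by_cases hcase : st ≤ n - r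
    · refine ⟨(t, st), hmem, ?_⟩
      rw [hTotA_closed n p t r st hr (by omega)]
      rw [if_pos (by constructor <;> omega)]
      omega
    · -- use the wrapped chord
      have hst0 : 0 < st := by omega
      refine ⟨(t + st - n, n - st), ?_, ?_⟩
      · refine ⟨by omega, ?_⟩
        have h1 : resZ n (t + st - n) = resZ n ((f a : ℤ)) := by
          apply resZ_congr hn
          have : t + st - n - f a = -(((f a : ℤ) - t - st) + n) := by ring
          rw [this]
          exact dvd_neg.mpr (Dvd.dvd.add hstd ⟨1, by ring⟩)
        have h2 : resZ n ((f a : ℤ)) = f a := resZ_coe hn hfan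
        rw [h1, h2, hinv a]
        have : t + st - n + (n - st : ℕ) - a = t - a := by omega
        rw [this]
        exact hta
      · rw [hTotA_closed n p (t + st - n) r (n - st) hr (by omega)]
        rw [if_pos (by refine ⟨by omega, by omega, by omega, by omega⟩)]
        omega
  · -- omega-stability
    ext ⟨q, s⟩
    constructor
    · rintro ⟨⟨q', s'⟩, ⟨hs'n, hdvd⟩, heq⟩
      unfold ωA at heq
      simp only [Prod.mk.injEq] at heq
      obtain ⟨h1, h2⟩ := heq
      have ha' : resZ n q' = resZ n q' := rfl
      set a := resZ n q' with hadef
      have han : a < n := resZ_lt hn q'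
      have hqa : (n : ℤ) ∣ (q' - a) := resZ_dvd hn q'
      have hfan : f a < n := hlt a han
      refine ⟨by simp only; omega, ?_⟩
      simp only
      have hres : resZ n q = f a := by
        rw [← h1]
        have h3 : resZ n (q' + s' - n) = resZ n ((f a : ℤ)) := by
          apply resZ_congr hn
          have : q' + s' - n - f a = (q' + s' - f a) - n := by ring
          rw [this]
          exact dvd_sub hdvd ⟨1, by ring⟩
        rw [h3, resZ_coe hn hfan]
      rw [hres, hinv a]
      have : q + (s : ℤ) - a = (q' - a) + (q + s - q') := by ring
      rw [this]
      refine Dvd.dvd.add hqa ?_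
      have : q + (s : ℤ) - q' = 0 := by omega
      rw [this]
      exact dvd_zero _
    · rintro ⟨hsn, hdvd⟩
      simp only at hsn hdvd
      set a := resZ n q with hadef
      have han : a < n := resZ_lt hn q
      have hqa : (n : ℤ) ∣ (q - a) := resZ_dvd hn q
      have hfan : f a < n := hlt a han
      refine ⟨(q + s, n - s), ⟨by simp only; omega, ?_⟩, ?_⟩
      · simp only
        have hres : resZ n (q + s) = f a := by
          have h3 : resZ n (q + s) = resZ n ((f a : ℤ)) := resZ_congr hn hdvd
          rw [h3, resZ_coe hn hfan]
        rw [hres, hinv a]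
        have : q + s + ((n - s : ℕ) : ℤ) - a = (q - a) + n := by omega
        rw [this]
        exact Dvd.dvd.add hqa ⟨1, by ring⟩
      · unfold ωA
        simp only [Prod.mk.injEq]
        constructor
        · omega
        · omega
  · -- C2
    rintro ⟨q, s⟩ hc ⟨p, r⟩ hd
    obtain ⟨hsn, hcdvd⟩ := hc
    obtain ⟨hrn, hddvd⟩ := hd
    simp only at hsn hcdvd hrn hddvd
    have hωne : ¬ ((q, s) = ωA n (q, s)) := fun h => omega_ne hn (q, s) hsn h.symm
    rw [if_neg (by tauto)]
    by_cases hmain : (p, r) = (q, s) ∨ (p, r) = ωA n (q, s)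
    · rw [if_pos hmain]
      rcases hmain with h | h
      · rw [Prod.mk.injEq] at h
        obtain ⟨rfl, rfl⟩ := h
        rw [hTotA_closed n p p r r hrn hrn, if_pos (by omega)]
      · unfold ωA at h
        rw [Prod.mk.injEq] at h
        obtain ⟨h1, h2⟩ := h
        rw [hTotA_closed n p q r s hrn hsn, if_pos (by omega)]
    · rw [if_neg hmain]
      rw [hTotA_closed n p q r s hrn hsn, if_neg]
      intro hcon
      obtain ⟨u1, u2, u3, u4⟩ := hcon
      rcases key_lemma hn ⟨hlt, hid, hinv, hnc⟩ hrn hsn hddvd hcdvd u1 u2 u3 u4 with h | h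
      · exact hmain (Or.inl (by rw [Prod.mk.injEq]; exact ⟨h.1, h.2⟩))
      · refine hmain (Or.inr ?_)
        unfold ωA
        rw [Prod.mk.injEq]
        constructor
        · simp only; omega
        · simp only; omega

end Part3
section Part4

lemma dvd_small {n z : ℤ} (h1 : 1 ≤ n) (hd : n ∣ z) (hlo : -n < z) (hhi : z < n) :
    z = 0 := by
  rcases hd with ⟨m, rfl⟩
  have h0 : 0 ≤ m := by by_contra h; push_neg at h; nlinarith
  have h2 : m ≤ 0 := by by_contra h; push_neg at h; nlinarith
  have : m = 0 := by omega
  rw [this]; ring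

lemma config_is_confOf {n : ℕ} (hn : 1 ≤ n) {C : Set (ℤ × ℕ)} (hC : IsConfigA n C) :
    ∃ f : ℕ → ℕ, NCInv n f ∧ C = confOf n f := by
  classical
  obtain ⟨hbound, hcov, hω, hpair⟩ := hC
  have hnZ : (1 : ℤ) ≤ n := by exact_mod_cast hn
  -- basic closure properties
  have hmemω : ∀ c ∈ C, ωA n c ∈ C := by
    intro c hc; rw [← hω]; exact ⟨c, hc, rfl⟩
  have hunω : ∀ q : ℤ, ∀ s : ℕ, (q, s) ∈ C → ((q + s : ℤ), n - s) ∈ C := by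
    intro q s hqs
    have : (q, s) ∈ ωA n '' C := by rw [hω]; exact hqs
    obtain ⟨⟨d1, d2⟩, hd, heq⟩ := this
    have hd2 : d2 ≤ n := hbound _ hd
    unfold ωA at heq
    rw [Prod.mk.injEq] at heq
    obtain ⟨h1, h2⟩ := heq
    simp only at h1 h2
    have e1 : d1 = q + s := by omega
    have e2 : d2 = n - s := by omega
    rw [← e1, ← e2]
    exact hd
  have hdown : ∀ q : ℤ, ∀ s : ℕ, (q, s) ∈ C → ((q - n : ℤ), s) ∈ C := by
    intro q s hqs
    have h1 := hmemω _ hqs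
    have h2 := hmemω _ h1
    unfold ωA at h1 h2
    simp only at h1 h2
    have hs : s ≤ n := hbound _ hqs
    have e1 : q + s - n + (n - s : ℕ) = q := by omega
    have e2 : n - (n - s) = s := by omega
    rw [e1, e2] at h2
    exact h2
  have hup : ∀ q : ℤ, ∀ s : ℕ, (q, s) ∈ C → ((q + n : ℤ), s) ∈ C := by
    intro q s hqs
    have hs : s ≤ n := hbound _ hqs
    have h1 := hunω _ _ hqs
    have h2 := hunω _ _ h1
    have e1 : q + s + ((n - s : ℕ) : ℤ) = q + n := by omega
    have e2 : n - (n - s) = s := by omega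
    rw [e1, e2] at h2
    exact h2
  have htrans : ∀ (q q' : ℤ) (s : ℕ), (q, s) ∈ C → (n : ℤ) ∣ (q - q') → (q', s) ∈ C := by
    intro q q' s hqs hdvd
    obtain ⟨k, hk⟩ := hdvd
    have hgen : ∀ m : ℕ, ∀ x : ℤ, (x, s) ∈ C → ((x + m * n : ℤ), s) ∈ C ∧ ((x - m * n : ℤ), s) ∈ C := by
      intro m
      induction m with
      | zero => intro x hx; constructor <;> simpa using hx
      | succ m ih =>
        intro x hx
        constructor
        · have := hup _ _ (ih x hx).1
          have e : x + m * n + n = x + (m + 1 : ℕ) * n := by push_cast; ring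
          rwa [e] at this
        · have := hdown _ _ (ih x hx).2
          have e : x - m * n - n = x - (m + 1 : ℕ) * n := by push_cast; ring
          rwa [e] at this
    rcases le_or_gt 0 k with hk0 | hk0
    · obtain ⟨m, rfl⟩ := Int.eq_ofNat_of_zero_le hk0
      have := (hgen m q hqs).2
      have e : q - m * n = q' := by push_cast at hk ⊢; linarith
      rwa [e] at this
    · obtain ⟨m, rfl⟩ : ∃ m : ℕ, k = -(m : ℤ) := by
        refine ⟨(-k).toNat, by omega⟩
      have := (hgen m q hqs).1
      have e : q + m * n = q' := by push_cast at hk ⊢; linarith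
      rwa [e] at this
  -- the pattern lemma from (C2)
  have hpat : ∀ (p q : ℤ) (r s : ℕ), (p, r) ∈ C → (q, s) ∈ C →
      p ≤ q → (q : ℤ) ≤ p + r → (p : ℤ) + r ≤ q + s → (q : ℤ) + s ≤ p + n →
      (p = q ∧ r = s) ∨ ((p : ℤ) = q + s - n ∧ (r : ℤ) = n - s) := by
    intro p q r s hd hc h1 h2 h3 h4
    have hrn : r ≤ n := hbound _ hd
    have hsn : s ≤ n := hbound _ hc
    have := hpair _ hc _ hd
    rw [hTotA_closed n p q r s hrn hsn, if_pos ⟨h1, h2, h3, h4⟩] at this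
    have hωne : ¬ ((q, s) = ωA n (q, s)) := fun h => omega_ne hn (q, s) hsn h.symm
    rw [if_neg (by tauto)] at this
    by_cases hor : (p, r) = (q, s) ∨ (p, r) = ωA n (q, s)
    · rcases hor with h | h
      · rw [Prod.mk.injEq] at h; exact Or.inl h
      · unfold ωA at h
        rw [Prod.mk.injEq] at h
        obtain ⟨e1, e2⟩ := h
        simp only at e1 e2
        right
        constructor
        · omega
        · omega
    · rw [if_neg hor] at this
      omega
  -- nonempty columns
  have hcol : ∀ q : ℤ, ∃ s : ℕ, (q, s) ∈ C := by
    intro q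
    obtain ⟨⟨q', s'⟩, hc, hpos⟩ := hcov (q, 0) (by simp)
    have hs' : s' ≤ n := hbound _ hc
    rw [hTotA_closed n q q' 0 s' (by omega) hs'] at hpos
    split_ifs at hpos with h
    · have : q' = q := by omega
      exact ⟨s', this ▸ hc⟩
    · omega
  set F : ℤ → ℕ := fun q => Classical.choose (hcol q) with hF
  have hFmem : ∀ q : ℤ, (q, F q) ∈ C := fun q => Classical.choose_spec (hcol q)
  have hFn : ∀ q : ℤ, F q ≤ n := fun q => hbound _ (hFmem q)
  set f : ℕ → ℕ := fun a => if a < n then resZ n ((a : ℤ) + F (a : ℤ)) else a with hfdef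
  -- key: f computed from any chord in the column
  have hW : ∀ (q : ℤ) (s : ℕ), (q, s) ∈ C → ∀ a : ℕ, a < n → (n : ℤ) ∣ (q - a) →
      f a = resZ n (q + s) := by
    intro q s hqs a haln hdvd
    have hs : s ≤ n := hbound _ hqs
    have has : ((a : ℤ), s) ∈ C := htrans q a s hqs hdvd
    have hres : resZ n (q + s) = resZ n ((a : ℤ) + s) := by
      apply resZ_congr hn
      have e : q + s - ((a : ℤ) + s) = q - a := by ring
      rw [e]; exact hdvd
    rw [hres, hfdef]
    simp only [if_pos haln]
    rcases le_total s (F (a : ℤ)) with hle | hle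
    · rcases hpat a a s (F (a : ℤ)) has (hFmem (a:ℤ)) le_rfl (by omega)
        (by omega) (by have := hFn (a:ℤ); omega) with h | h
      · rw [h.2]
      · have e1 : F (a : ℤ) = n := by omega
        have e2 : s = 0 := by omega
        rw [e1, e2]
        apply resZ_congr hn
        refine ⟨1, by push_cast; ring⟩
    · rcases hpat a a (F (a : ℤ)) s (hFmem (a:ℤ)) has le_rfl (by have := hFn (a:ℤ); omega)
        (by omega) (by omega) with h | h
      · rw [h.2]
      · have e1 : s = n := by omega
        have e2 : F (a : ℤ) = 0 := by omega
        rw [e1, e2]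
        apply resZ_congr hn
        refine ⟨-1, by push_cast; ring⟩
  -- C equals confOf n f
  have hCf : C = confOf n f := by
    ext ⟨q, s⟩
    constructor
    · intro hqs
      refine ⟨hbound _ hqs, ?_⟩
      simp only
      rw [hW q s hqs (resZ n q) (resZ_lt hn q) (resZ_dvd hn q)]
      have := resZ_dvd hn (q + s)
      have e : q + s - resZ n (q + s) = q + (s : ℤ) - resZ n (q + s) := by ring
      rwa [← e]
    · rintro ⟨hsn, hdvd⟩
      simp only at hsn hdvd
      obtain ⟨s0, hs0⟩ := hcol q
      have hs0n : s0 ≤ n := hbound _ hs0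
      have hfval : f (resZ n q) = resZ n (q + s0) := hW q s0 hs0 _ (resZ_lt hn q) (resZ_dvd hn q)
      rw [hfval] at hdvd
      have hd2 : (n : ℤ) ∣ ((s : ℤ) - s0) := by
        have h1 := resZ_dvd hn (q + s0)
        have e : (q + (s:ℤ) - resZ n (q + s0)) - ((q + s0) - resZ n (q + s0)) = (s : ℤ) - s0 := by
          ring
        rw [← e]
        exact dvd_sub hdvd h1
      obtain ⟨k, hk⟩ := hd2
      have hk1 : -1 ≤ k := by nlinarith
      have hk2 : k ≤ 1 := by nlinarith
      have : k = -1 ∨ k = 0 ∨ k = 1 := by omega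
      rcases this with rfl | rfl | rfl
      · -- s0 = n, s = 0
        have e1 : s0 = n := by omega
        have e2 : s = 0 := by omega
        rw [e2]
        have := hunω q n (e1 ▸ hs0)
        have e3 : n - n = 0 := by omega
        rw [e3] at this
        have := hdown _ _ this
        have e4 : q + (n : ℕ) - n = q := by push_cast; ring
        rwa [e4] at this
      · have : s = s0 := by omega
        rw [this]; exact hs0
      · -- s0 = 0, s = n
        have e1 : s0 = 0 := by omega
        have e2 : s = n := by omega
        rw [e2]
        have := hunω q 0 (e1 ▸ hs0)
        have e3 : n - 0 = n := by omega
        have e4 : q + ((0:ℕ) : ℤ) = q := by push_cast; ring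
        rw [e3, e4] at this
        exact this
  -- f is a noncrossing involution
  refine ⟨f, ⟨?_, ?_, ?_, ?_⟩, hCf⟩
  · intro i hi
    rw [hfdef]
    simp only [if_pos hi]
    exact resZ_lt hn _
  · intro i hi
    rw [hfdef]
    simp only [if_neg (by omega : ¬ i < n)]
  · -- involution
    intro i
    by_cases hi : i < n
    · have hFi := hFmem (i : ℤ)
      have hFin := hFn (i : ℤ)
      have hfi : f i = resZ n ((i : ℤ) + F (i : ℤ)) := by
        rw [hfdef]; simp only [if_pos hi]
      have hfin : f i < n := by rw [hfi]; exact resZ_lt hn _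
      have hnext : ((i : ℤ) + F (i : ℤ), n - F (i : ℤ)) ∈ C := hunω _ _ hFi
      have : f (f i) = resZ n ((i : ℤ) + F (i : ℤ) + (n - F (i : ℤ) : ℕ)) := by
        apply hW _ _ hnext _ hfin
        rw [hfi]
        exact resZ_dvd hn _
      rw [this]
      have e : (i : ℤ) + F (i : ℤ) + ((n - F (i : ℤ) : ℕ) : ℤ) = (i : ℤ) + n := by omega
      rw [e]
      have : resZ n ((i : ℤ) + n) = resZ n (i : ℤ) := resZ_congr hn ⟨1, by ring⟩
      rw [this, resZ_coe hn hi]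
    · have h1 : f i = i := by rw [hfdef]; simp only [if_neg hi]
      rw [h1, h1]
  · -- noncrossing
    intro i j hij hjfi
    have hfin : f i < n := by
      by_cases hin : i < n
      · rw [hfdef]; simp only [if_pos hin]; exact resZ_lt hn _
      · exfalso
        have : f i = i := by rw [hfdef]; simp only [if_neg hin]
        omega
    have hin : i < n := by omega
    have hjn : j < n := by omega
    have hfi : f i = resZ n ((i : ℤ) + F (i : ℤ)) := by rw [hfdef]; simp only [if_pos hin]
    have hfj : f j = resZ n ((j : ℤ) + F (j : ℤ)) := by rw [hfdef]; simp only [if_pos hjn]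
    set si := F (i : ℤ) with hsi
    set sj := F (j : ℤ) with hsj
    have hsin : si ≤ n := hFn _
    have hsjn : sj ≤ n := hFn _
    have hiC : ((i : ℤ), si) ∈ C := hFmem _
    have hjC : ((j : ℤ), sj) ∈ C := hFmem _
    -- identify f i = i + si (the chord cannot wrap)
    have hfility : (n:ℤ) ∣ ((i : ℤ) + si - f i) := by
      rw [hfi]; exact resZ_dvd hn _
    have hfjlity : (n:ℤ) ∣ ((j : ℤ) + sj - f j) := by
      rw [hfj]; exact resZ_dvd hn _
    have hfieq : (f i : ℤ) = (i : ℤ) + si ∨ (f i : ℤ) = (i : ℤ) + si - n := by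
      have hb := dvd_small2 hnZ hfility (by omega) (by omega)
      omega
    have hfival : (f i : ℤ) = (i : ℤ) + si := by
      rcases hfieq with h | h
      · exact h
      · exfalso; omega
    have hfjeq : (f j : ℤ) = (j : ℤ) + sj ∨ (f j : ℤ) = (j : ℤ) + sj - n := by
      have hb := dvd_small2 hnZ hfjlity (by
        have : f j < n := by rw [hfj]; exact resZ_lt hn _
        omega) (by omega)
      omega
    rcases hfjeq with hfjval | hfjval
    · -- chord at j does not wrap
      by_cases hz : sj = 0
      · constructor <;> omega
      · have hcross := hpat i j si sj hiC hjC (by omega) (by omega)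
        by_cases hle : (i : ℤ) + si ≤ j + sj
        · exfalso
          rcases hcross hle (by
              have : f j < n := by rw [hfj]; exact resZ_lt hn _
              omega) with h | h
          · omega
          · omega
        · constructor <;> omega
    · -- chord at j wraps around
      have hsj0 : 0 < sj := by
        by_contra h
        push_neg at h
        omega
      by_cases hle : f j ≤ i
      · exfalso
        have hcross := hpat i j si sj hiC hjC (by omega) (by omega) (by omega) (by omega)
        rcases hcross with h | h
        · omega
        · omega
      · constructor <;> omega

end Part4
section Part5

lemma confOf_inj {n : ℕ} (hn : 1 ≤ n) {f g : ℕ → ℕ} (hf : NCInv n f) (hg : NCInv n g)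
    (h : confOf n f = confOf n g) : f = g := by
  have hnZ : (1 : ℤ) ≤ n := by exact_mod_cast hn
  funext a
  by_cases ha : a < n
  · have hfa : f a < n := hf.1 a ha
    have hga : g a < n := hg.1 a ha
    set s : ℕ := resZ n ((f a : ℤ) - a) with hs
    have hsn : s < n := resZ_lt hn _
    have hdvd : (n : ℤ) ∣ ((f a : ℤ) - a - s) := resZ_dvd hn _
    have hmem : ((a : ℤ), s) ∈ confOf n f := by
      refine ⟨by omega, ?_⟩
      simp only
      rw [resZ_coe hn ha]
      have e : (a : ℤ) + s - f a = -((f a : ℤ) - a - s) := by ring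
      rw [e]; exact dvd_neg.mpr hdvd
    rw [h] at hmem
    obtain ⟨-, hdvd2⟩ := hmem
    simp only at hdvd2
    rw [resZ_coe hn ha] at hdvd2
    have hfg : (n : ℤ) ∣ ((f a : ℤ) - g a) := by
      have hsum := Dvd.dvd.add hdvd hdvd2
      have e : ((f a : ℤ) - a - s) + ((a : ℤ) + s - g a) = (f a : ℤ) - g a := by ring
      rwa [e] at hsum
    have := dvd_small hnZ hfg (by omega) (by omega)
    omega
  · rw [hf.2.1 a (by omega), hg.2.1 a (by omega)]

instance ncinvFinite (m : ℕ) : Finite {f : ℕ → ℕ // NCInv m f} := by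
  apply Finite.of_injective
    (fun F : {f : ℕ → ℕ // NCInv m f} => fun i : Fin m => (⟨F.1 i.1, F.2.1 i.1 i.2⟩ : Fin m))
  intro F G hFG
  apply Subtype.ext
  funext i
  by_cases hi : i < m
  · exact congrArg Fin.val (congrFun hFG ⟨i, hi⟩)
  · rw [F.2.2.1 i (by omega), G.2.2.1 i (by omega)]

/-! Decomposition of noncrossing matchings by the partner of `0`. -/

def shD (f : ℕ → ℕ) : ℕ → ℕ := fun i => f (i + 1) - 1

def gl0 (g : ℕ → ℕ) : ℕ → ℕ := fun i => if i = 0 then 0 else g (i - 1) + 1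

def innF (j : ℕ) (f : ℕ → ℕ) : ℕ → ℕ := fun i => if i < j then f (i + 1) - 1 else i

def outF (c j : ℕ) (f : ℕ → ℕ) : ℕ → ℕ := fun i => if i < c then f (i + j + 2) - (j + 2) else i

def glJ (j : ℕ) (g1 g2 : ℕ → ℕ) : ℕ → ℕ := fun i =>
  if i = 0 then j + 1
  else if i ≤ j then g1 (i - 1) + 1
  else if i = j + 1 then 0
  else g2 (i - j - 2) + j + 2

lemma pos_of_pos {m : ℕ} {f : ℕ → ℕ} (hf : NCInv m f) (hf0 : f 0 = 0) :
    ∀ x, 1 ≤ x → 1 ≤ f x := by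
  intro x hx
  by_contra h
  push_neg at h
  have h0 : f x = 0 := by omega
  have := hf.2.2.1 x
  rw [h0, hf0] at this
  omega

lemma lemA {m : ℕ} {f : ℕ → ℕ} (hf : NCInv (m + 2) f) (hf0 : f 0 = 0) :
    NCInv (m + 1) (shD f) := by
  obtain ⟨hlt, hid, hinv, hnc⟩ := hf
  have hpos := pos_of_pos ⟨hlt, hid, hinv, hnc⟩ hf0
  refine ⟨?_, ?_, ?_, ?_⟩
  · intro i hi
    have h1 := hlt (i + 1) (by omega)
    have h2 := hpos (i + 1) (by omega)
    unfold shD; omega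
  · intro i hi
    have := hid (i + 1) (by omega)
    unfold shD; omega
  · intro i
    have h2 := hpos (i + 1) (by omega)
    unfold shD
    have e : f (i + 1) - 1 + 1 = f (i + 1) := by omega
    rw [e, hinv]
    omega
  · intro i j hij hj
    unfold shD at hj ⊢
    have h2 := hpos (i + 1) (by omega)
    have h3 := hpos (j + 1) (by omega)
    have := hnc (i + 1) (j + 1) (by omega) (by omega)
    omega

lemma lemB {m : ℕ} {g : ℕ → ℕ} (hg : NCInv (m + 1) g) :
    NCInv (m + 2) (gl0 g) := by
  obtain ⟨hlt, hid, hinv, hnc⟩ := hg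
  refine ⟨?_, ?_, ?_, ?_⟩
  · intro i hi
    unfold gl0
    split_ifs with h
    · omega
    · have := hlt (i - 1) (by omega); omega
  · intro i hi
    unfold gl0
    rw [if_neg (by omega)]
    have := hid (i - 1) (by omega); omega
  · intro i
    unfold gl0
    by_cases h1 : i = 0
    · simp [h1]
    · rw [if_neg h1, if_neg (by omega : ¬ (g (i - 1) + 1 = 0))]
      have e : g (i - 1) + 1 - 1 = g (i - 1) := by omega
      rw [e, hinv]
      omega
  · intro i j hij hj
    unfold gl0 at hj ⊢
    split_ifs at hj with h1
    · omega
    · rw [if_neg (by omega), if_neg (by omega)]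
      have := hnc (i - 1) (j - 1) (by omega) (by omega)
      omega

lemma lemCD {m : ℕ} {f : ℕ → ℕ} (hf : NCInv (m + 2) f) (hf0 : f 0 = 0) :
    gl0 (shD f) = f := by
  have hpos := pos_of_pos hf hf0
  funext i
  unfold gl0 shD
  split_ifs with h
  · subst h; omega
  · have e : i - 1 + 1 = i := by omega
    rw [e]
    have := hpos i (by omega)
    omega

lemma lemC' {g : ℕ → ℕ} : shD (gl0 g) = g := by
  funext i
  unfold shD gl0
  rw [if_neg (by omega)]
  simp

end Part5
section Part5b

lemma sepIn {m j : ℕ} {f : ℕ → ℕ} (hf : NCInv (m + 2) f) (hf0 : f 0 = j + 1) (hj : j ≤ m) :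
    ∀ x, 1 ≤ x → x ≤ j → 1 ≤ f x ∧ f x ≤ j := by
  obtain ⟨hlt, hid, hinv, hnc⟩ := hf
  intro x h1 h2
  have hnc0 := hnc 0 x (by omega) (by omega)
  rw [hf0] at hnc0
  omega

lemma sepOut {m j : ℕ} {f : ℕ → ℕ} (hf : NCInv (m + 2) f) (hf0 : f 0 = j + 1) (hj : j ≤ m) :
    ∀ x, j + 2 ≤ x → x < m + 2 → j + 2 ≤ f x ∧ f x < m + 2 := by
  obtain ⟨hlt, hid, hinv, hnc⟩ := hf
  intro x h1 h2
  have hx2 : f x < m + 2 := hlt x h2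
  have hfj1 : f (j + 1) = 0 := by
    have := hinv 0
    rw [hf0] at this
    exact this
  have h0 : f x ≠ 0 := by
    intro h
    have := hinv x
    rw [h, hf0] at this
    omega
  have hj1 : f x ≠ j + 1 := by
    intro h
    have := hinv x
    rw [h, hfj1] at this
    omega
  have hmid : ¬ (1 ≤ f x ∧ f x ≤ j) := by
    rintro ⟨u1, u2⟩
    have hnc0 := hnc 0 (f x) (by omega) (by rw [hf0]; omega)
    rw [hinv x] at hnc0
    rw [hf0] at hnc0
    omega
  constructor <;> omega

lemma lemE1 {m j : ℕ} {f : ℕ → ℕ} (hf : NCInv (m + 2) f) (hf0 : f 0 = j + 1) (hj : j ≤ m) :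
    NCInv j (innF j f) := by
  have hsep := sepIn hf hf0 hj
  obtain ⟨hlt, hid, hinv, hnc⟩ := hf
  refine ⟨?_, ?_, ?_, ?_⟩
  · intro i hi
    unfold innF
    rw [if_pos hi]
    have := hsep (i + 1) (by omega) (by omega)
    omega
  · intro i hi
    unfold innF
    rw [if_neg (by omega)]
  · intro i
    unfold innF
    by_cases hi : i < j
    · have h1 := hsep (i + 1) (by omega) (by omega)
      rw [if_pos hi, if_pos (by omega)]
      have e : f (i + 1) - 1 + 1 = f (i + 1) := by omega
      rw [e, hinv]
      omega
    · rw [if_neg hi, if_neg hi]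
  · intro i j' hij hj'
    unfold innF at hj' ⊢
    by_cases hi : i < j
    · rw [if_pos hi] at hj'
      have h1 := hsep (i + 1) (by omega) (by omega)
      have hj'j : j' < j := by omega
      rw [if_pos hj'j, if_pos hi]
      have h2 := hsep (j' + 1) (by omega) (by omega)
      have := hnc (i + 1) (j' + 1) (by omega) (by omega)
      omega
    · rw [if_neg hi] at hj'
      omega

lemma lemE2 {m j : ℕ} {f : ℕ → ℕ} (hf : NCInv (m + 2) f) (hf0 : f 0 = j + 1) (hj : j ≤ m) :
    NCInv (m - j) (outF (m - j) j f) := by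
  have hsep := sepOut hf hf0 hj
  obtain ⟨hlt, hid, hinv, hnc⟩ := hf
  refine ⟨?_, ?_, ?_, ?_⟩
  · intro i hi
    unfold outF
    rw [if_pos hi]
    have := hsep (i + j + 2) (by omega) (by omega)
    omega
  · intro i hi
    unfold outF
    rw [if_neg (by omega)]
  · intro i
    unfold outF
    by_cases hi : i < m - j
    · have h1 := hsep (i + j + 2) (by omega) (by omega)
      rw [if_pos hi, if_pos (by omega)]
      have e : f (i + j + 2) - (j + 2) + j + 2 = f (i + j + 2) := by omega
      rw [e, hinv]
      omega
    · rw [if_neg hi, if_neg hi]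
  · intro i j' hij hj'
    unfold outF at hj' ⊢
    by_cases hi : i < m - j
    · rw [if_pos hi] at hj'
      have h1 := hsep (i + j + 2) (by omega) (by omega)
      have hj'j : j' < m - j := by omega
      rw [if_pos hj'j, if_pos hi]
      have h2 := hsep (j' + j + 2) (by omega) (by omega)
      have := hnc (i + j + 2) (j' + j + 2) (by omega) (by omega)
      omega
    · rw [if_neg hi] at hj'
      omega

lemma lemF {m j : ℕ} {g1 g2 : ℕ → ℕ} (hg1 : NCInv j g1) (hg2 : NCInv (m - j) g2)
    (hj : j ≤ m) : NCInv (m + 2) (glJ j g1 g2) := by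
  obtain ⟨hlt1, hid1, hinv1, hnc1⟩ := hg1
  obtain ⟨hlt2, hid2, hinv2, hnc2⟩ := hg2
  refine ⟨?_, ?_, ?_, ?_⟩
  · intro i hi
    unfold glJ
    split_ifs with h1 h2 h3
    · omega
    · have := hlt1 (i - 1) (by omega); omega
    · omega
    · have := hlt2 (i - j - 2) (by omega); omega
  · intro i hi
    unfold glJ
    rw [if_neg (by omega), if_neg (by omega), if_neg (by omega)]
    have := hid2 (i - j - 2) (by omega); omega
  · intro i
    unfold glJ
    by_cases h1 : i = 0
    · rw [if_pos h1, if_neg (by omega), if_neg (by omega), if_pos rfl]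
      omega
    · rw [if_neg h1]
      by_cases h2 : i ≤ j
      · rw [if_pos h2]
        have hv := hlt1 (i - 1) (by omega)
        rw [if_neg (by omega), if_pos (by omega)]
        have e : g1 (i - 1) + 1 - 1 = g1 (i - 1) := by omega
        rw [e, hinv1]
        omega
      · rw [if_neg h2]
        by_cases h3 : i = j + 1
        · rw [if_pos h3, if_pos rfl]
          omega
        · rw [if_neg h3]
          rw [if_neg (by omega), if_neg (by omega), if_neg (by omega)]
          have e : g2 (i - j - 2) + j + 2 - j - 2 = g2 (i - j - 2) := by omega
          rw [e, hinv2]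
          omega
  · intro i j' hij hj'
    unfold glJ at hj' ⊢
    by_cases h1 : i = 0
    · subst h1
      rw [if_pos rfl] at hj'
      rw [if_pos rfl, if_neg (by omega), if_pos (by omega)]
      have := hlt1 (j' - 1) (by omega)
      omega
    · rw [if_neg h1] at hj'
      by_cases h2 : i ≤ j
      · rw [if_pos h2] at hj'
        have hv := hlt1 (i - 1) (by omega)
        rw [if_neg (by omega), if_pos (by omega), if_neg (by omega), if_pos h2]
        have := hnc1 (i - 1) (j' - 1) (by omega) (by omega)
        omega
      · rw [if_neg h2] at hj'
        by_cases h3 : i = j + 1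
        · rw [if_pos h3] at hj'
          omega
        · rw [if_neg h3] at hj'
          rw [if_neg (by omega), if_neg (by omega), if_neg (by omega),
            if_neg (by omega), if_neg (by omega), if_neg (by omega)]
          have := hnc2 (i - j - 2) (j' - j - 2) (by omega) (by omega)
          omega

end Part5b
section Part5c

lemma lemG1 {j : ℕ} {g1 g2 : ℕ → ℕ} (hg1 : NCInv j g1) :
    innF j (glJ j g1 g2) = g1 := by
  funext i
  unfold innF glJ
  by_cases hi : i < j
  · rw [if_pos hi, if_neg (by omega), if_pos (by omega)]
    simp
  · rw [if_neg hi, hg1.2.1 i (by omega)]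

lemma lemG2 {m j : ℕ} {g1 g2 : ℕ → ℕ} (hg2 : NCInv (m - j) g2) :
    outF (m - j) j (glJ j g1 g2) = g2 := by
  funext i
  unfold outF glJ
  by_cases hi : i < m - j
  · rw [if_pos hi, if_neg (by omega), if_neg (by omega), if_neg (by omega)]
    have e : i + j + 2 - j - 2 = i := by omega
    rw [e]
    omega
  · rw [if_neg hi, hg2.2.1 i (by omega)]

lemma lemH {m j : ℕ} {f : ℕ → ℕ} (hf : NCInv (m + 2) f) (hf0 : f 0 = j + 1) (hj : j ≤ m) :
    glJ j (innF j f) (outF (m - j) j f) = f := by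
  have hsin := sepIn hf hf0 hj
  have hsout := sepOut hf hf0 hj
  obtain ⟨hlt, hid, hinv, hnc⟩ := hf
  have hfj1 : f (j + 1) = 0 := by
    have := hinv 0
    rwa [hf0] at this
  funext i
  unfold glJ innF outF
  by_cases h1 : i = 0
  · rw [if_pos h1, h1, hf0]
  · rw [if_neg h1]
    by_cases h2 : i ≤ j
    · rw [if_pos h2, if_pos (by omega)]
      have e : i - 1 + 1 = i := by omega
      rw [e]
      have := hsin i (by omega) h2
      omega
    · rw [if_neg h2]
      by_cases h3 : i = j + 1
      · rw [if_pos h3, h3, hfj1]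
      · rw [if_neg h3]
        by_cases h4 : i - j - 2 < m - j
        · rw [if_pos h4]
          have e : i - j - 2 + j + 2 = i := by omega
          rw [e]
          have := hsout i (by omega) (by omega)
          omega
        · rw [if_neg h4]
          rw [hid i (by omega)]
          omega

def stepEquiv (m : ℕ) :
    {f : ℕ → ℕ // NCInv (m + 2) f} ≃
      ({f : ℕ → ℕ // NCInv (m + 1) f} ⊕
        (Σ j : Fin (m + 1), {f : ℕ → ℕ // NCInv j.1 f} × {f : ℕ → ℕ // NCInv (m - j.1) f})) where
  toFun F :=
    if h : F.1 0 = 0 then Sum.inl ⟨shD F.1, lemA F.2 h⟩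
    else
      Sum.inr ⟨⟨F.1 0 - 1, by have := F.2.1 0 (by omega); omega⟩,
        ⟨innF (F.1 0 - 1) F.1,
          lemE1 (j := F.1 0 - 1) F.2 (by omega) (by have := F.2.1 0 (by omega); omega)⟩,
        ⟨outF (m - (F.1 0 - 1)) (F.1 0 - 1) F.1,
          lemE2 (j := F.1 0 - 1) F.2 (by omega) (by have := F.2.1 0 (by omega); omega)⟩⟩
  invFun := Sum.elim (fun G => ⟨gl0 G.1, lemB G.2⟩)
    (fun T => ⟨glJ T.1.1 T.2.1.1 T.2.2.1,
      lemF T.2.1.2 T.2.2.2 (by have := T.1.2; omega)⟩)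
  left_inv := by
    rintro ⟨f, hf⟩
    dsimp only
    by_cases h : f 0 = 0
    · rw [dif_pos h]
      simp only [Sum.elim_inl]
      exact Subtype.ext (lemCD hf h)
    · rw [dif_neg h]
      simp only [Sum.elim_inr]
      apply Subtype.ext
      exact lemH hf (by have := hf.1 0 (by omega); omega) (by have := hf.1 0 (by omega); omega)
  right_inv := by
    rintro (⟨g, hg⟩ | ⟨⟨j, hj⟩, ⟨g1, hg1⟩, ⟨g2, hg2⟩⟩)
    · have h0 : gl0 g 0 = 0 := by unfold gl0; simp
      dsimp only [Sum.elim_inl]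
      rw [dif_pos h0]
      apply congrArg Sum.inl
      exact Subtype.ext lemC'
    · have h0 : glJ j g1 g2 0 = j + 1 := by unfold glJ; simp
      dsimp only [Sum.elim_inr]
      rw [dif_neg (by omega)]
      apply congrArg Sum.inr
      apply Sigma.ext
      · apply Fin.ext
        simp only [Fin.val_mk]
        omega
      · exact heq_of_eq (Prod.ext (Subtype.ext (lemG1 hg1)) (Subtype.ext (lemG2 hg2)))

end Part5c
section Part6

lemma nat_card_sigma {ι : Type*} [Fintype ι] (F : ι → Type*) [∀ i, Finite (F i)] :
    Nat.card (Σ i, F i) = ∑ i, Nat.card (F i) := by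
  classical
  letI : ∀ i, Fintype (F i) := fun i => Fintype.ofFinite (F i)
  rw [Nat.card_eq_fintype_card, Fintype.card_sigma]
  exact Finset.sum_congr rfl fun i _ => (Nat.card_eq_fintype_card).symm

lemma ncinv_id (m : ℕ) : NCInv m id := by
  refine ⟨fun i hi => hi, fun i _ => rfl, fun i => rfl, fun i j hij hj => ?_⟩
  exact absurd hj (by simp; omega)

lemma ncinv_card : ∀ m : ℕ, Nat.card {f : ℕ → ℕ // NCInv m f} = motzkin m := by
  intro m
  induction m using Nat.strong_induction_on with
  | _ m IH =>
    match m with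
    | 0 =>
      rw [show motzkin 0 = 1 by rw [motzkin]]
      rw [Nat.card_eq_one_iff_exists]
      refine ⟨⟨id, ncinv_id 0⟩, ?_⟩
      rintro ⟨f, hf⟩
      apply Subtype.ext
      funext i
      exact hf.2.1 i (by omega)
    | 1 =>
      rw [show motzkin 1 = 1 by rw [motzkin]]
      rw [Nat.card_eq_one_iff_exists]
      refine ⟨⟨id, ncinv_id 1⟩, ?_⟩
      rintro ⟨f, hf⟩
      apply Subtype.ext
      funext i
      by_cases hi : i < 1
      · have h0 : i = 0 := by omega
        have := hf.1 i hi
        simp only [id]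
        omega
      · exact hf.2.1 i (by omega)
    | (m + 2) =>
      rw [Nat.card_congr (stepEquiv m), Nat.card_sum, nat_card_sigma]
      have hsum : ∀ j : Fin (m + 1),
          Nat.card ({f : ℕ → ℕ // NCInv j.1 f} × {f : ℕ → ℕ // NCInv (m - j.1) f}) =
            motzkin j.1 * motzkin (m - j.1) := by
        intro j
        rw [Nat.card_prod, IH j.1 (by omega), IH (m - j.1) (by omega)]
      rw [Finset.sum_congr rfl fun j _ => hsum j, IH (m + 1) (by omega)]
      have e1 : ∑ j : Fin (m + 1), motzkin j.1 * motzkin (m - j.1)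
          = ∑ i ∈ Finset.range (m + 1), motzkin i * motzkin (m - i) := by
        rw [Finset.sum_range fun i => motzkin i * motzkin (m - i)]
      have e2 : motzkin (m + 2) = motzkin (m + 1) +
          ∑ i ∈ (Finset.range (m + 1)).attach, motzkin i.1 * motzkin (m - i.1) := by
        rw [motzkin]
      rw [e2, e1, Finset.sum_attach (Finset.range (m + 1)) fun i => motzkin i * motzkin (m - i)]

end Part6


/-- The number of configurations of `ℤA_{n+1}`: for every `n ≥ 1`, the set of
configurations of `ℤA_{n+1}` is finite and its cardinality is the `n`-th Motzkin
number. -/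
theorem card_config_ZA (n : ℕ) (hn : 1 ≤ n) :
    {C : Set (ℤ × ℕ) | IsConfigA n C}.Finite ∧
      {C : Set (ℤ × ℕ) | IsConfigA n C}.ncard = motzkin n := by
  have hset : {C : Set (ℤ × ℕ) | IsConfigA n C} = confOf n '' {f : ℕ → ℕ | NCInv n f} := by
    ext C
    constructor
    · intro hC
      obtain ⟨f, hf, hCf⟩ := config_is_confOf hn hC
      exact ⟨f, hf, hCf.symm⟩
    · rintro ⟨f, hf, rfl⟩
      exact confOf_isConfig hn hf
  haveI : Finite ↥{f : ℕ → ℕ | NCInv n f} := ncinvFinite n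
  have hfin : {f : ℕ → ℕ | NCInv n f}.Finite := Set.toFinite _
  constructor
  · rw [hset]
    exact hfin.image _
  · have hinj : Set.InjOn (confOf n) {f : ℕ → ℕ | NCInv n f} :=
      fun f hf g hg h => confOf_inj hn hf hg h
    rw [hset, Set.ncard_image_of_injOn hinj, ← Nat.card_coe_set_eq]
    exact ncinv_card n
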